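/- arXiv:2310.07551 — 8 statements merged into one kernel-verified Lean document; each statement's English description precedes it below -/
import Mathlib

section
/- The coefficients η₁ = −5/4, α₁₁ = 4√10/15 + 4/3, α₁₂ = −4√10/15 + 4/3, η₂ = 9, α₂₁ = 2√10/9 + 16/9, α₂₂ = −2√10/9 + 16/9 satisfy the order-3 splitting system for ℓ = 1 with ℓ₁ = 1, ℓ₂ = 2: η₁/1!² + η₂/2!² = 1/1!; η₁α₁₁/(1!·2!) + η₂α₂₁/(2!·3!) = 1/2!; η₁α₁₂/(1!·2!) + η₂α₂₂/(2!·3!) = 1/2!; η₁α₁₁²/(1!·3!) + η₂α₂₁²/(2!·4!) = 1/3!; η₁α₁₂²/(1!·3!) + η₂α₂₂²/(2!·4!) = 1/3!; η₁α₁₁α₁₂/2!² + η₂α₂₁α₂₂/3!² = 2/3!. -/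
theorem splitting_coeffs_ell_one :
    let η₁ : ℝ := -5/4
    let α₁₁ : ℝ := 4 * Real.sqrt 10 / 15 + 4/3
    let α₁₂ : ℝ := -(4 * Real.sqrt 10 / 15) + 4/3
    let η₂ : ℝ := 9
    let α₂₁ : ℝ := 2 * Real.sqrt 10 / 9 + 16/9
    let α₂₂ : ℝ := -(2 * Real.sqrt 10 / 9) + 16/9
    η₁ / (Nat.factorial 1 : ℝ) ^ 2 + η₂ / (Nat.factorial 2 : ℝ) ^ 2
        = 1 / (Nat.factorial 1 : ℝ) ∧
    η₁ * α₁₁ / ((Nat.factorial 1 : ℝ) * (Nat.factorial 2 : ℝ))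
        + η₂ * α₂₁ / ((Nat.factorial 2 : ℝ) * (Nat.factorial 3 : ℝ))
        = 1 / (Nat.factorial 2 : ℝ) ∧
    η₁ * α₁₂ / ((Nat.factorial 1 : ℝ) * (Nat.factorial 2 : ℝ))
        + η₂ * α₂₂ / ((Nat.factorial 2 : ℝ) * (Nat.factorial 3 : ℝ))
        = 1 / (Nat.factorial 2 : ℝ) ∧
    η₁ * α₁₁ ^ 2 / ((Nat.factorial 1 : ℝ) * (Nat.factorial 3 : ℝ))
        + η₂ * α₂₁ ^ 2 / ((Nat.factorial 2 : ℝ) * (Nat.factorial 4 : ℝ))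
        = 1 / (Nat.factorial 3 : ℝ) ∧
    η₁ * α₁₂ ^ 2 / ((Nat.factorial 1 : ℝ) * (Nat.factorial 3 : ℝ))
        + η₂ * α₂₂ ^ 2 / ((Nat.factorial 2 : ℝ) * (Nat.factorial 4 : ℝ))
        = 1 / (Nat.factorial 3 : ℝ) ∧
    η₁ * α₁₁ * α₁₂ / (Nat.factorial 2 : ℝ) ^ 2
        + η₂ * α₂₁ * α₂₂ / (Nat.factorial 3 : ℝ) ^ 2
        = 2 / (Nat.factorial 3 : ℝ) := by
  have h10 : Real.sqrt 10 ^ 2 = 10 := Real.sq_sqrt (by norm_num)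
  refine ⟨by norm_num [Nat.factorial], ?_, ?_, ?_, ?_, ?_⟩ <;>
    simp only [Nat.factorial] <;> push_cast <;> nlinarith [h10, Real.sqrt_nonneg 10]
end

section
/- The coefficients η₁ = −4/3, α₁₁ = √33/8 + 9/8, α₁₂ = −√33/8 + 9/8, η₂ = 22/3, α₂₁ = 3√33/22 + 3/2, α₂₂ = −3√33/22 + 3/2 satisfy the order-3 splitting system for ℓ = 2 with ℓ₁ = 1, ℓ₂ = 2: η₁/1!² + η₂/2!² = 1/2!; η₁α₁₁/(1!·2!) + η₂α₂₁/(2!·3!) = 1/3!; η₁α₁₂/(1!·2!) + η₂α₂₂/(2!·3!) = 1/3!; η₁α₁₁²/(1!·3!) + η₂α₂₁²/(2!·4!) = 1/4!; η₁α₁₂²/(1!·3!) + η₂α₂₂²/(2!·4!) = 1/4!; η₁α₁₁α₁₂/2!² + η₂α₂₁α₂₂/3!² = 2/4!. -/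
theorem splitting_coeffs_ell_two :
    let η₁ : ℝ := -4/3
    let α₁₁ : ℝ := Real.sqrt 33 / 8 + 9/8
    let α₁₂ : ℝ := -(Real.sqrt 33 / 8) + 9/8
    let η₂ : ℝ := 22/3
    let α₂₁ : ℝ := 3 * Real.sqrt 33 / 22 + 3/2
    let α₂₂ : ℝ := -(3 * Real.sqrt 33 / 22) + 3/2
    η₁ / (Nat.factorial 1 : ℝ) ^ 2 + η₂ / (Nat.factorial 2 : ℝ) ^ 2
        = 1 / (Nat.factorial 2 : ℝ) ∧
    η₁ * α₁₁ / ((Nat.factorial 1 : ℝ) * (Nat.factorial 2 : ℝ))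
        + η₂ * α₂₁ / ((Nat.factorial 2 : ℝ) * (Nat.factorial 3 : ℝ))
        = 1 / (Nat.factorial 3 : ℝ) ∧
    η₁ * α₁₂ / ((Nat.factorial 1 : ℝ) * (Nat.factorial 2 : ℝ))
        + η₂ * α₂₂ / ((Nat.factorial 2 : ℝ) * (Nat.factorial 3 : ℝ))
        = 1 / (Nat.factorial 3 : ℝ) ∧
    η₁ * α₁₁ ^ 2 / ((Nat.factorial 1 : ℝ) * (Nat.factorial 3 : ℝ))
        + η₂ * α₂₁ ^ 2 / ((Nat.factorial 2 : ℝ) * (Nat.factorial 4 : ℝ))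
        = 1 / (Nat.factorial 4 : ℝ) ∧
    η₁ * α₁₂ ^ 2 / ((Nat.factorial 1 : ℝ) * (Nat.factorial 3 : ℝ))
        + η₂ * α₂₂ ^ 2 / ((Nat.factorial 2 : ℝ) * (Nat.factorial 4 : ℝ))
        = 1 / (Nat.factorial 4 : ℝ) ∧
    η₁ * α₁₁ * α₁₂ / (Nat.factorial 2 : ℝ) ^ 2
        + η₂ * α₂₁ * α₂₂ / (Nat.factorial 3 : ℝ) ^ 2
        = 2 / (Nat.factorial 4 : ℝ) := by
  have h : Real.sqrt 33 * Real.sqrt 33 = 33 := Real.mul_self_sqrt (by norm_num)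
  refine ⟨?_, ?_, ?_, ?_, ?_, ?_⟩ <;> simp [Nat.factorial] <;> nlinarith [h]
end

section
/- The complex coefficients η₁ = 2/3 + (2√3/3)i, α₁ = 3/4 − (√3/4)i, η₂ = −2/3 − (8√3/3)i, α₂ = 6/7 − (3√3/7)i satisfy the 2D system for ℓ = 2 with equal directional parameters: η₁/1!² + η₂/2!² = 1/2, η₁α₁/(1!·2!) + η₂α₂/(2!·3!) = 1/6, η₁α₁²/(1!·3!) + η₂α₂²/(2!·4!) = 1/24, and η₁α₁²/2!² + η₂α₂²/3!² = 2/24. -/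
theorem splitting_coeffs_complex_ell_two :
    let η₁ : ℂ := 2/3 + (2 * Real.sqrt 3 / 3 : ℝ) * Complex.I
    let α₁ : ℂ := 3/4 - (Real.sqrt 3 / 4 : ℝ) * Complex.I
    let η₂ : ℂ := -2/3 - (8 * Real.sqrt 3 / 3 : ℝ) * Complex.I
    let α₂ : ℂ := 6/7 - (3 * Real.sqrt 3 / 7 : ℝ) * Complex.I
    η₁ / (Nat.factorial 1 : ℂ) ^ 2 + η₂ / (Nat.factorial 2 : ℂ) ^ 2 = 1/2 ∧
    η₁ * α₁ / ((Nat.factorial 1 : ℂ) * (Nat.factorial 2 : ℂ))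
        + η₂ * α₂ / ((Nat.factorial 2 : ℂ) * (Nat.factorial 3 : ℂ)) = 1/6 ∧
    η₁ * α₁ ^ 2 / ((Nat.factorial 1 : ℂ) * (Nat.factorial 3 : ℂ))
        + η₂ * α₂ ^ 2 / ((Nat.factorial 2 : ℂ) * (Nat.factorial 4 : ℂ)) = 1/24 ∧
    η₁ * α₁ ^ 2 / (Nat.factorial 2 : ℂ) ^ 2
        + η₂ * α₂ ^ 2 / (Nat.factorial 3 : ℂ) ^ 2 = 2/24 := by
  intro η₁ α₁ η₂ α₂
  have hs : ((Real.sqrt 3 : ℝ) : ℂ) ^ 2 = 3 := by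
    norm_cast
    rw [Real.sq_sqrt] <;> norm_num
  have hI : Complex.I ^ 2 = -1 := Complex.I_sq
  set S : ℂ := ((Real.sqrt 3 : ℝ) : ℂ) with hS
  simp only [η₁, α₁, η₂, α₂, Nat.factorial]
  push_cast
  refine ⟨by ring, ?_, ?_, ?_⟩
  · linear_combination (-1/84 : ℂ) * hs + (S^2/84) * hI
  · linear_combination ((-25/7056 : ℂ) + 23/7056 * S * Complex.I) * hs
      + ((25/7056 : ℂ) * S^2 - 23/7056 * S^3 * Complex.I) * hI
  · linear_combination ((5/4704 : ℂ) + 15/4704 * S * Complex.I) * hs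
      + ((-5/4704 : ℂ) * S^2 - 15/4704 * S^3 * Complex.I) * hI
end

section
/- For every integer d ≥ 2, the coefficients η₁ = 7/4 + (3√2/2)i, α₁ = 12/11 − (4√2/11)i, η₂ = 2^{d−2}(−3 − 6√2·i), α₂ = 4/3 − (2√2/3)i satisfy the d-dimensional system for ℓ = 1 with ℓ₁ = 1, ℓ₂ = 2: η₁/1!^d + η₂/2!^d = 1; η₁α₁/(1!^{d−1}·2!) + η₂α₂/(2!^{d−1}·3!) = 1/2; η₁α₁²/(1!^{d−1}·3!) + η₂α₂²/(2!^{d−1}·4!) = 1/6; η₁α₁²/(1!^{d−2}·2!²) + η₂α₂²/(2!^{d−2}·3!²) = 1/3. -/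
theorem splitting_coeffs_complex_ddim (d : ℕ) (hd : 2 ≤ d) :
    let η₁ : ℂ := 7/4 + (3 * Real.sqrt 2 / 2 : ℝ) * Complex.I
    let α₁ : ℂ := 12/11 - (4 * Real.sqrt 2 / 11 : ℝ) * Complex.I
    let η₂ : ℂ := 2 ^ (d - 2) * (-3 - (6 * Real.sqrt 2 : ℝ) * Complex.I)
    let α₂ : ℂ := 4/3 - (2 * Real.sqrt 2 / 3 : ℝ) * Complex.I
    η₁ / (Nat.factorial 1 : ℂ) ^ d + η₂ / (Nat.factorial 2 : ℂ) ^ d = 1 ∧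
    η₁ * α₁ / ((Nat.factorial 1 : ℂ) ^ (d - 1) * (Nat.factorial 2 : ℂ))
        + η₂ * α₂ / ((Nat.factorial 2 : ℂ) ^ (d - 1) * (Nat.factorial 3 : ℂ)) = 1/2 ∧
    η₁ * α₁ ^ 2 / ((Nat.factorial 1 : ℂ) ^ (d - 1) * (Nat.factorial 3 : ℂ))
        + η₂ * α₂ ^ 2 / ((Nat.factorial 2 : ℂ) ^ (d - 1) * (Nat.factorial 4 : ℂ)) = 1/6 ∧
    η₁ * α₁ ^ 2 / ((Nat.factorial 1 : ℂ) ^ (d - 2) * (Nat.factorial 2 : ℂ) ^ 2)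
        + η₂ * α₂ ^ 2 / ((Nat.factorial 2 : ℂ) ^ (d - 2) * (Nat.factorial 3 : ℂ) ^ 2)
        = 1/3 := by
  obtain ⟨k, rfl⟩ := Nat.exists_eq_add_of_le hd
  intro η₁ α₁ η₂ α₂
  have hk : (2:ℂ)^k ≠ 0 := pow_ne_zero _ two_ne_zero
  have hs : ((Real.sqrt 2 : ℝ) : ℂ)^2 = 2 := by
    rw [← Complex.ofReal_pow, Real.sq_sqrt (by norm_num : (0:ℝ) ≤ 2)]
    norm_num
  have hI := Complex.I_sq
  have e2 : 2 + k - 2 = k := by omega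
  have e1 : 2 + k - 1 = 1 + k := by omega
  have cancel : ∀ X Y : ℂ, (2:ℂ)^k * X / ((2:ℂ)^k * Y) = X / Y :=
    fun X Y => mul_div_mul_left X Y hk
  simp only [η₁, α₁, η₂, α₂, e1, e2, Nat.factorial]
  push_cast
  set s : ℂ := ((Real.sqrt 2 : ℝ) : ℂ) with hs2
  refine ⟨?_, ?_, ?_, ?_⟩
  · rw [show (7/4 + 3*s/2*Complex.I) / (1:ℂ)^(2+k)
        + (2:ℂ)^k * (-3 - 6*s*Complex.I) / (2:ℂ)^(2+k)
        = (7/4 + 3*s/2*Complex.I)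
        + (2:ℂ)^k * (-3 - 6*s*Complex.I) / ((2:ℂ)^k * 4) from by ring, cancel]
    linear_combination
  · rw [show (7/4 + 3*s/2*Complex.I) * (12/11 - 4*s/11*Complex.I)
          / ((1:ℂ)^(1+k) * 2)
        + (2:ℂ)^k * (-3 - 6*s*Complex.I) * (4/3 - 2*s/3*Complex.I)
          / ((2:ℂ)^(1+k) * 6)
        = (7/4 + 3*s/2*Complex.I) * (12/11 - 4*s/11*Complex.I) / 2
        + (2:ℂ)^k * ((-3 - 6*s*Complex.I) * (4/3 - 2*s/3*Complex.I))
          / ((2:ℂ)^k * 12) from by ring, cancel]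
    linear_combination (2/33 * Complex.I^2) * hs + (4/33) * hI
  · rw [show (7/4 + 3*s/2*Complex.I) * (12/11 - 4*s/11*Complex.I)^2
          / ((1:ℂ)^(1+k) * 6)
        + (2:ℂ)^k * (-3 - 6*s*Complex.I) * (4/3 - 2*s/3*Complex.I)^2
          / ((2:ℂ)^(1+k) * 24)
        = (7/4 + 3*s/2*Complex.I) * (12/11 - 4*s/11*Complex.I)^2 / 6
        + (2:ℂ)^k * ((-3 - 6*s*Complex.I) * (4/3 - 2*s/3*Complex.I)^2)
          / ((2:ℂ)^k * 48) from by ring, cancel]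
    linear_combination (151/4356 * Complex.I^2 - 49/2178 * s * Complex.I^3) * hs
      + (151/2178 - 49/1089 * s * Complex.I) * hI
  · rw [show (7/4 + 3*s/2*Complex.I) * (12/11 - 4*s/11*Complex.I)^2
          / ((1:ℂ)^k * 2^2)
        + (2:ℂ)^k * (-3 - 6*s*Complex.I) * (4/3 - 2*s/3*Complex.I)^2
          / ((2:ℂ)^k * 6^2)
        = (7/4 + 3*s/2*Complex.I) * (12/11 - 4*s/11*Complex.I)^2 / 4
        + (2:ℂ)^k * ((-3 - 6*s*Complex.I) * (4/3 - 2*s/3*Complex.I)^2)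
          / ((2:ℂ)^k * 36) from by ring, cancel]
    linear_combination (64/3267 * Complex.I^2 - 80/3267 * s * Complex.I^3) * hs
      + (128/3267 - 160/3267 * s * Complex.I) * hI
end

section
/- There is no real solution to the d-dimensional two-term splitting system for d > 2, ℓ ∈ {1,2}, ℓ₁ = 1, ℓ₂ = 2, in which all directional parameters are equal: i.e., there exist no real numbers η₁, η₂, α₁, α₂ satisfying η₁ + η₂/2^d = 1/ℓ!, η₁α₁/2 + η₂α₂/(2^{d−1}·6) = 1/(ℓ+1)!, η₁α₁²/6 + η₂α₂²/(2^{d−1}·24) = 1/(ℓ+2)!, and η₁α₁²/4 + η₂α₂²/(2^{d−2}·36) = 2/(ℓ+2)!. -/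
/-!
Write cₖ = 1/(ℓ+k)! and β = η₂/2^(d-2). The two quadratic equations determine
η₁α₁² = 24c₂ and βα₂² = -144c₂; substituting (η₁α₁)² = η₁·η₁α₁² and (βα₂)² = β·βα₂²
into the two linear equations gives the identity 48c₀c₂ + (η₁α₁ - 6c₁)² = 24c₁², so a real
solution forces 2c₀c₂ ≤ c₁². For ℓ ≥ 1 this fails, as ℓ!(ℓ+2)! < 2((ℓ+1)!)² amounts to
ℓ + 2 < 2(ℓ + 1).
-/

open Nat

theorem two_mul_mul_le_sq_of_two_term_splitting {c₀ c₁ c₂ η₁ β α₁ α₂ : ℝ}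
    (h₀ : η₁ + β / 4 = c₀) (h₁ : η₁ * α₁ / 2 + β * α₂ / 12 = c₁)
    (h₂ : η₁ * α₁ ^ 2 / 6 + β * α₂ ^ 2 / 48 = c₂)
    (h₃ : η₁ * α₁ ^ 2 / 4 + β * α₂ ^ 2 / 36 = 2 * c₂) :
    2 * c₀ * c₂ ≤ c₁ ^ 2 := by
  have hA : η₁ * α₁ ^ 2 = 24 * c₂ := by linear_combination 36 * h₃ - 48 * h₂
  have hB : β * α₂ ^ 2 = -144 * c₂ := by linear_combination 432 * h₂ - 288 * h₃
  have key : 48 * c₀ * c₂ + (η₁ * α₁ - 6 * c₁) ^ 2 = 24 * c₁ ^ 2 := by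
    rw [← h₀, ← h₁]; linear_combination -2 * η₁ * hA + β / 12 * hB
  linarith [sq_nonneg (η₁ * α₁ - 6 * c₁)]

theorem factorial_mul_factorial_add_two_lt {ℓ : ℕ} (hℓ : 0 < ℓ) :
    ℓ ! * (ℓ + 2)! < (ℓ + 1)! ^ 2 * 2 := by
  calc ℓ ! * (ℓ + 2)! = ℓ ! ^ 2 * (ℓ + 1) * (ℓ + 2) := by
        simp only [factorial_succ]; ring
    _ < ℓ ! ^ 2 * (ℓ + 1) * (2 * (ℓ + 1)) := by gcongr; omega
    _ = (ℓ + 1)! ^ 2 * 2 := by simp only [factorial_succ]; ring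

theorem inv_factorial_succ_sq_lt {ℓ : ℕ} (hℓ : 0 < ℓ) :
    (1 / ((ℓ + 1)! : ℝ)) ^ 2 < 2 * (1 / (ℓ ! : ℝ)) * (1 / ((ℓ + 2)! : ℝ)) := by
  field_simp
  exact_mod_cast factorial_mul_factorial_add_two_lt hℓ

theorem no_real_two_term_splitting (d : ℕ) (hd : 2 < d) (ℓ : ℕ) (hℓ : ℓ = 1 ∨ ℓ = 2) :
    ¬ ∃ η₁ η₂ α₁ α₂ : ℝ,
      η₁ + η₂ / 2 ^ d = 1 / (Nat.factorial ℓ : ℝ) ∧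
      η₁ * α₁ / 2 + η₂ * α₂ / (2 ^ (d - 1) * 6) = 1 / (Nat.factorial (ℓ + 1) : ℝ) ∧
      η₁ * α₁ ^ 2 / 6 + η₂ * α₂ ^ 2 / (2 ^ (d - 1) * 24)
        = 1 / (Nat.factorial (ℓ + 2) : ℝ) ∧
      η₁ * α₁ ^ 2 / 4 + η₂ * α₂ ^ 2 / (2 ^ (d - 2) * 36)
        = 2 / (Nat.factorial (ℓ + 2) : ℝ) := by
  rintro ⟨η₁, η₂, α₁, α₂, e₀, e₁, e₂, e₃⟩
  obtain ⟨k, rfl⟩ : ∃ k, d = k + 2 := ⟨d - 2, by omega⟩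
  simp only [Nat.add_sub_cancel, show k + 2 - 1 = k + 1 by omega] at e₁ e₂ e₃
  obtain ⟨β, rfl⟩ : ∃ β : ℝ, η₂ = β * 2 ^ k := ⟨η₂ / 2 ^ k, by field_simp⟩
  have h₀ : η₁ + β / 4 = 1 / (ℓ ! : ℝ) := by
    rw [← e₀]; field_simp; ring
  have h₁ : η₁ * α₁ / 2 + β * α₂ / 12 = 1 / ((ℓ + 1)! : ℝ) := by
    rw [← e₁]; field_simp; ring
  have h₂ : η₁ * α₁ ^ 2 / 6 + β * α₂ ^ 2 / 48 = 1 / ((ℓ + 2)! : ℝ) := by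
    rw [← e₂]; field_simp; ring
  have h₃ : η₁ * α₁ ^ 2 / 4 + β * α₂ ^ 2 / 36 = 2 * (1 / ((ℓ + 2)! : ℝ)) := by
    rw [mul_one_div, ← e₃]; field_simp
  have hle := two_mul_mul_le_sq_of_two_term_splitting h₀ h₁ h₂ h₃
  have hlt := inv_factorial_succ_sq_lt (ℓ := ℓ) (by omega)
  linarith
end

section
/- For any integer d ≥ 3 and the choice ℓ = 1 with ℓ₁ = ℓ₃ = 1, ℓ₂ = 2, the real coefficients η₁ = 2243/1350 + 440521/(675√2991111), α₁ = 3(5161 + √2991111)/15869, η₂ = −(12544/675)·2^{d−3}, α₂ = 45/28, η₃ = 2243/1350 − 440521/(675√2991111), α₃ = 3(5161 − √2991111)/15869 satisfy: η₁ + η₂/2^d + η₃ = 1; η₁α₁/2 + η₂α₂/(2^{d−1}·6) + η₃α₃/2 = 1/2; η₁α₁²/6 + η₂α₂²/(2^{d−1}·24) + η₃α₃²/6 = 1/6; η₁α₁²/4 + η₂α₂²/(2^{d−2}·36) + η₃α₃²/4 = 1/3. -/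
/-!
The weight `η₂` carries the factor `2 ^ (d - 3)`, which cancels against the `2 ^ (d - k)` in each
identity, so the identities do not depend on `d`. The outer pairs `(η₁, α₁)` and `(η₃, α₃)` are
exchanged by `σ ↦ -σ`, `σ = √2991111`, so only their moments `η₁ + η₃`, `η₁ α₁ + η₃ α₃` and
`η₁ α₁² + η₃ α₃²` enter, and these are rational: in the first moment the `1/σ` part of `η` meets
the `σ` part of `α` in a constant, and the second only needs `σ ^ 2 = 2991111`.
-/

namespace ThreeTermSplitting

theorem pow_sub_div_pow_sub {G₀ : Type*} [CommGroupWithZero G₀] {a : G₀} (ha : a ≠ 0)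
    {d i j : ℕ} (hji : j ≤ i) (hid : i ≤ d) :
    a ^ (d - i) / a ^ (d - j) = (a ^ (i - j))⁻¹ := by
  rw [show d - j = d - i + (i - j) by omega, pow_add, div_mul_cancel_left₀ (pow_ne_zero _ ha)]

theorem outer_moment_one {σ : ℝ} (hσ₀ : σ ≠ 0) :
    (2243/1350 + 440521 / (675 * σ)) * (3 * (5161 + σ) / 15869) +
      (2243/1350 - 440521 / (675 * σ)) * (3 * (5161 - σ) / 15869) = 157/45 := by
  field_simp
  ring

theorem outer_moment_two {σ : ℝ} (hσ : σ ^ 2 = 2991111) :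
    (2243/1350 + 440521 / (675 * σ)) * (3 * (5161 + σ) / 15869) ^ 2 +
      (2243/1350 - 440521 / (675 * σ)) * (3 * (5161 - σ) / 15869) ^ 2 = 4 := by
  have hσ₀ : σ ≠ 0 := by rintro rfl; norm_num at hσ
  field_simp
  linear_combination 27252450 * σ * hσ

end ThreeTermSplitting

open ThreeTermSplitting in
theorem three_term_splitting_coeffs_ell_one (d : ℕ) (hd : 3 ≤ d) :
    let η₁ : ℝ := 2243/1350 + 440521 / (675 * Real.sqrt 2991111)
    let α₁ : ℝ := 3 * (5161 + Real.sqrt 2991111) / 15869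
    let η₂ : ℝ := -(12544/675) * 2 ^ (d - 3)
    let α₂ : ℝ := 45/28
    let η₃ : ℝ := 2243/1350 - 440521 / (675 * Real.sqrt 2991111)
    let α₃ : ℝ := 3 * (5161 - Real.sqrt 2991111) / 15869
    η₁ + η₂ / 2 ^ d + η₃ = 1 ∧
    η₁ * α₁ / 2 + η₂ * α₂ / (2 ^ (d - 1) * 6) + η₃ * α₃ / 2 = 1/2 ∧
    η₁ * α₁ ^ 2 / 6 + η₂ * α₂ ^ 2 / (2 ^ (d - 1) * 24) + η₃ * α₃ ^ 2 / 6 = 1/6 ∧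
    η₁ * α₁ ^ 2 / 4 + η₂ * α₂ ^ 2 / (2 ^ (d - 2) * 36) + η₃ * α₃ ^ 2 / 4 = 1/3 := by
  dsimp only
  have hσ : Real.sqrt 2991111 ^ 2 = (2991111 : ℝ) := Real.sq_sqrt (by norm_num)
  have m₁ := outer_moment_one (σ := Real.sqrt 2991111) (by positivity)
  have m₂ := outer_moment_two hσ
  have e₀ : (2 : ℝ) ^ (d - 3) / 2 ^ d = 1 / 8 := by
    rw [show (2 : ℝ) ^ d = 2 ^ (d - 0) from rfl, pow_sub_div_pow_sub two_ne_zero (by norm_num) hd]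
    norm_num
  have e₁ : (2 : ℝ) ^ (d - 3) / 2 ^ (d - 1) = 1 / 4 := by
    rw [pow_sub_div_pow_sub two_ne_zero (by norm_num) hd]; norm_num
  have e₂ : (2 : ℝ) ^ (d - 3) / 2 ^ (d - 2) = 1 / 2 := by
    rw [pow_sub_div_pow_sub two_ne_zero (by norm_num) hd]; norm_num
  refine ⟨?_, ?_, ?_, ?_⟩
  · linear_combination -(12544 / 675) * e₀
  · linear_combination m₁ / 2 - 12544 / 675 * 15 / 56 * e₁
  · linear_combination m₂ / 6 - 12544 / 675 * 675 / 6272 * e₁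
  · linear_combination m₂ / 4 - 12544 / 675 * 225 / 3136 * e₂
end

section
/- For any integer d ≥ 3 and the choice ℓ = 2 with ℓ₁ = ℓ₃ = 1, ℓ₂ = 2, the real coefficients η₁ = 19/27 + 151/(27√2391), α₁ = 3(121 + √2391)/490, η₂ = −(196/27)·2^{d−3}, α₂ = 9/7, η₃ = 19/27 − 151/(27√2391), α₃ = 3(121 − √2391)/490 satisfy: η₁ + η₂/2^d + η₃ = 1/2; η₁α₁/2 + η₂α₂/(2^{d−1}·6) + η₃α₃/2 = 1/6; η₁α₁²/6 + η₂α₂²/(2^{d−1}·24) + η₃α₃²/6 = 1/24; η₁α₁²/4 + η₂α₂²/(2^{d−2}·36) + η₃α₃²/4 = 1/12. -/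
/-!
The outer coefficients are conjugate in `√2391`, so in each moment `Σ ηᵢ αᵢʲ` of the outer pair
the odd powers of `√2391` cancel and `√2391 ^ 2 = 2391` leaves a rational number.  The factor
`2 ^ (d - 3)` of `η₂` cancels against the powers of two in the denominators, so the middle term
contributes a constant independent of `d`.  Each identity is then a rational identity.
-/

namespace ThreeTermSplitting

lemma outer_pair_weight_sum (s : ℝ) :
    (19/27 + 151 / (27 * s)) + (19/27 - 151 / (27 * s)) = 38/27 := by
  ring

lemma outer_pair_first_moment {s : ℝ} (hs : s ≠ 0) :
    (19/27 + 151 / (27 * s)) * (3 * (121 + s) / 490)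
      + (19/27 - 151 / (27 * s)) * (3 * (121 - s) / 490) = 10/9 := by
  field_simp
  ring

lemma outer_pair_second_moment {s : ℝ} (hs : s ^ 2 = 2391) :
    (19/27 + 151 / (27 * s)) * (3 * (121 + s) / 490) ^ 2
      + (19/27 - 151 / (27 * s)) * (3 * (121 - s) / 490) ^ 2 = 1 := by
  have hs0 : s ≠ 0 := by rintro rfl; norm_num at hs
  field_simp
  linear_combination (342 * s) * hs

section Middle

variable {d : ℕ}

lemma two_pow_eq_two_pow_sub_three_mul (hd : 3 ≤ d) {k : ℕ} (hk : k ≤ 3) :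
    (2 : ℝ) ^ (d - k) = 2 ^ (d - 3) * 2 ^ (3 - k) := by
  rw [← pow_add]
  congr 1
  omega

lemma middle_weight (hd : 3 ≤ d) : -(196/27) * (2 : ℝ) ^ (d - 3) / 2 ^ d = -49/54 := by
  have h := two_pow_eq_two_pow_sub_three_mul hd (k := 0) (by norm_num)
  rw [Nat.sub_zero] at h
  rw [h]
  field_simp
  norm_num

lemma middle_first_moment (hd : 3 ≤ d) :
    -(196/27) * (2 : ℝ) ^ (d - 3) * (9/7) / (2 ^ (d - 1) * 6) = -7/18 := by
  rw [two_pow_eq_two_pow_sub_three_mul hd (by norm_num : 1 ≤ 3)]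
  field_simp
  norm_num

lemma middle_second_moment (hd : 3 ≤ d) :
    -(196/27) * (2 : ℝ) ^ (d - 3) * (9/7) ^ 2 / (2 ^ (d - 1) * 24) = -1/8 := by
  rw [two_pow_eq_two_pow_sub_three_mul hd (by norm_num : 1 ≤ 3)]
  field_simp
  norm_num

lemma middle_second_moment' (hd : 3 ≤ d) :
    -(196/27) * (2 : ℝ) ^ (d - 3) * (9/7) ^ 2 / (2 ^ (d - 2) * 36) = -1/6 := by
  rw [two_pow_eq_two_pow_sub_three_mul hd (by norm_num : 2 ≤ 3)]
  field_simp
  norm_num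

end Middle

end ThreeTermSplitting

open ThreeTermSplitting in
theorem three_term_splitting_coeffs_ell_two (d : ℕ) (hd : 3 ≤ d) :
    let η₁ : ℝ := 19/27 + 151 / (27 * Real.sqrt 2391)
    let α₁ : ℝ := 3 * (121 + Real.sqrt 2391) / 490
    let η₂ : ℝ := -(196/27) * 2 ^ (d - 3)
    let α₂ : ℝ := 9/7
    let η₃ : ℝ := 19/27 - 151 / (27 * Real.sqrt 2391)
    let α₃ : ℝ := 3 * (121 - Real.sqrt 2391) / 490
    η₁ + η₂ / 2 ^ d + η₃ = 1/2 ∧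
    η₁ * α₁ / 2 + η₂ * α₂ / (2 ^ (d - 1) * 6) + η₃ * α₃ / 2 = 1/6 ∧
    η₁ * α₁ ^ 2 / 6 + η₂ * α₂ ^ 2 / (2 ^ (d - 1) * 24) + η₃ * α₃ ^ 2 / 6 = 1/24 ∧
    η₁ * α₁ ^ 2 / 4 + η₂ * α₂ ^ 2 / (2 ^ (d - 2) * 36) + η₃ * α₃ ^ 2 / 4 = 1/12 := by
  intro η₁ α₁ η₂ α₂ η₃ α₃
  have hs : Real.sqrt 2391 ^ 2 = 2391 := Real.sq_sqrt (by norm_num)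
  have hs0 : Real.sqrt 2391 ≠ 0 := (Real.sqrt_pos.mpr (by norm_num)).ne'
  have weight := outer_pair_weight_sum (Real.sqrt 2391)
  have first := outer_pair_first_moment hs0
  have second := outer_pair_second_moment hs
  refine ⟨?_, ?_, ?_, ?_⟩
  · linear_combination weight + middle_weight hd
  · linear_combination first / 2 + middle_first_moment hd
  · linear_combination second / 6 + middle_second_moment hd
  · linear_combination second / 4 + middle_second_moment' hd
end

section
/- There are no real numbers η₁, η₂, α₁₁, α₁₂, α₂₁, α₂₂ satisfying the six order conditions of the two-dimensional two-term splitting for ℓ = 1 (with ℓ₁ = 1, ℓ₂ = 2), namely η₁ + η₂/4 = 1, η₁α₁₁/2 + η₂α₂₁/12 = 1/2, η₁α₁₂/2 + η₂α₂₂/12 = 1/2, η₁α₁₁²/6 + η₂α₂₁²/48 = 1/6, η₁α₁₂²/6 + η₂α₂₂²/48 = 1/6, η₁α₁₁α₁₂/4 + η₂α₂₁α₂₂/36 = 1/3, together with the additional conditions α₁₁ = α₁₂ and α₂₁ = α₂₂. -/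
theorem no_symmetric_real_solution_2d :
    ¬ ∃ η₁ η₂ α₁₁ α₁₂ α₂₁ α₂₂ : ℝ,
      (η₁ + η₂ / 4 = 1 ∧
       η₁ * α₁₁ / 2 + η₂ * α₂₁ / 12 = 1/2 ∧
       η₁ * α₁₂ / 2 + η₂ * α₂₂ / 12 = 1/2 ∧
       η₁ * α₁₁ ^ 2 / 6 + η₂ * α₂₁ ^ 2 / 48 = 1/6 ∧
       η₁ * α₁₂ ^ 2 / 6 + η₂ * α₂₂ ^ 2 / 48 = 1/6 ∧
       η₁ * α₁₁ * α₁₂ / 4 + η₂ * α₂₁ * α₂₂ / 36 = 1/3) ∧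
      α₁₁ = α₁₂ ∧ α₂₁ = α₂₂ := by
  rintro ⟨η₁, η₂, a, a', b, b', ⟨h1, h2, h3, h4, h5, h6⟩, rfl, rfl⟩
  -- derive η₂ * b ^ 2 = -24 and η₁ * a ^ 2 = 4
  have hb2 : η₂ * b ^ 2 = -24 := by linarith
  have ha2 : η₁ * a ^ 2 = 4 := by linarith
  have hu2 : (η₁ * a) ^ 2 = 4 * η₁ := by linear_combination η₁ * ha2
  have hv2 : (η₂ * b) ^ 2 = -24 * η₂ := by linear_combination η₂ * hb2
  nlinarith [hu2, hv2, sq_nonneg (η₁ * a - 3), h1, h2]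
end
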